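/- Let M be an abelian group, I a set, and G = M^I the direct product of copies of M indexed by I. The following conditions are equivalent: (i) every countable controllable subgroup of G is uniformly controllable in G; (ii) every controllable subgroup of G is uniformly controllable in G; (iii) either I is finite or M is finitely generated. -/

import Mathlib

/-- Projection of an element of the direct product `I → M` to the coordinates
in `J`. -/
def proj {I : Type*} {M : Type*} (J : Set I) (g : I → M) : J → M :=
  fun j => g j

/-- A subgroup `H` of the direct product `G = M^I` is *controllable* in `G` if
`p_J(H) = p_J(H ∩ ⊕_{i ∈ I} M)` for every finite `J ⊆ I`. -/
def Controllable {I : Type*} {M : Type*} [AddCommGroup M]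
    (H : AddSubgroup (I → M)) : Prop :=
  ∀ J : Set I, J.Finite →
    proj J '' (H : Set (I → M)) =
      proj J '' ((H : Set (I → M)) ∩ {g | {i | g i ≠ 0}.Finite})

/-- A subgroup `H` of the direct product `G = M^I` is *uniformly controllable*
in `G` if for every finite `J ⊆ I` there is a finite `K ⊆ I` with
`p_J(H) = p_J(H ∩ ⊕_{i ∈ K} M)`. -/
def UniformlyControllable {I : Type*} {M : Type*} [AddCommGroup M]
    (H : AddSubgroup (I → M)) : Prop :=
  ∀ J : Set I, J.Finite → ∃ K : Set I, K.Finite ∧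
    proj J '' (H : Set (I → M)) =
      proj J '' ((H : Set (I → M)) ∩ {g | ∀ i ∉ K, g i = 0})

/-!
If `M` is finitely generated, the image of a controllable `H` in the finitely generated group
`M^J` is finitely generated; its generators lift to finitely supported elements of `H`, and the
union of their supports is the required `K`.

If `I` is infinite and `M` is not finitely generated, pick `m₀, m₁, …` with each `mₙ` outside the
subgroup generated by its predecessors, and let `H` be generated by the elements carrying `mₙ` at
a fixed coordinate `i₀` and at a coordinate `iₙ₊₁`. Its elements are finitely supported, so `H` is
countable and controllable. But an element of `H` vanishing outside a finite `K` takes at `i₀` a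
value in the subgroup generated by the `mₙ` with `iₙ₊₁ ∈ K`, so for `n` beyond these it cannot
agree at `i₀` with the generator carrying `mₙ`.
-/

theorem AddSubgroup.fg_of_addGroup_fg {A : Type*} [AddCommGroup A] [AddGroup.FG A]
    (P : AddSubgroup A) : P.FG := by
  have : Module.Finite ℤ A := Module.Finite.iff_addGroup_fg.mpr ‹_›
  rw [← P.toIntSubmodule_toAddSubgroup, ← Submodule.fg_iff_addSubgroup_fg]
  exact IsNoetherian.noetherian _

theorem exists_strictMono_of_not_wellFoundedGT {α : Type*} [Preorder α]
    (h : ¬ WellFoundedGT α) : ∃ f : ℕ → α, StrictMono f := by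
  rw [WellFoundedGT, isWellFounded_iff, RelEmbedding.wellFounded_iff_isEmpty,
    not_isEmpty_iff] at h
  obtain ⟨f⟩ := h
  exact ⟨f, fun _ _ hab => f.map_rel_iff.mpr hab⟩

theorem exists_seq_notMem_closure_of_not_fg {A : Type*} [AddCommGroup A]
    (hA : ¬ AddGroup.FG A) :
    ∃ m : ℕ → A, ∀ n, m n ∉ AddSubgroup.closure (m '' Set.Iio n) := by
  have hnoeth : ¬ WellFoundedGT (Submodule ℤ A) := fun h =>
    have := isNoetherian_iff'.mpr h
    hA (Module.Finite.iff_addGroup_fg.mp inferInstance)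
  obtain ⟨N, hN⟩ := exists_strictMono_of_not_wellFoundedGT hnoeth
  choose m hm_mem hm_notMem using fun n => SetLike.exists_of_lt (hN (Nat.lt_succ_self n))
  refine ⟨m, fun n hn => hm_notMem n ?_⟩
  refine (AddSubgroup.closure_le (N n).toAddSubgroup).mpr ?_ hn
  rintro _ ⟨k, hk, rfl⟩
  exact hN.monotone (Nat.succ_le_of_lt hk) (hm_mem k)

section ProductGroup

variable {I M : Type*} [AddCommGroup M]

def projHom (J : Set I) : (I → M) →+ (J → M) where
  toFun := proj J
  map_zero' := rfl
  map_add' _ _ := rfl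

theorem coe_map_projHom (J : Set I) (H : AddSubgroup (I → M)) :
    (H.map (projHom J) : Set (J → M)) = proj J '' H :=
  rfl

def supportedOn (K : Set I) : AddSubgroup (I → M) where
  carrier := {g | ∀ i ∉ K, g i = 0}
  zero_mem' _ _ := rfl
  add_mem' ha hb i hi := by simp [ha i hi, hb i hi]
  neg_mem' ha i hi := by simp [ha i hi]

theorem uniformlyControllable_of_finite [Finite I] (H : AddSubgroup (I → M)) :
    UniformlyControllable H :=
  fun _ _ => ⟨Set.univ, Set.finite_univ, by simp⟩

theorem controllable_of_forall_finite {H : AddSubgroup (I → M)}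
    (hH : ∀ g ∈ H, {i | g i ≠ 0}.Finite) : Controllable H :=
  fun _ _ => by
    rw [Set.inter_eq_left.mpr (show (H : Set (I → M)) ⊆ {g | {i | g i ≠ 0}.Finite} from hH)]

theorem uniformlyControllable_of_fg [AddGroup.FG M] {H : AddSubgroup (I → M)}
    (hH : Controllable H) : UniformlyControllable H := by
  intro J hJ
  have : Finite J := hJ.to_subtype
  obtain ⟨T, hT⟩ := (H.map (projHom J)).fg_of_addGroup_fg
  have hlift : ∀ t ∈ T, ∃ g ∈ H, {i | g i ≠ 0}.Finite ∧ proj J g = t := by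
    intro t ht
    have : t ∈ proj J '' H := by
      rw [← coe_map_projHom, ← hT]
      exact AddSubgroup.subset_closure ht
    obtain ⟨g, ⟨hgH, hg⟩, rfl⟩ := hH J hJ ▸ this
    exact ⟨g, hgH, hg, rfl⟩
  choose! g hgH hg hgt using hlift
  set K := ⋃ t ∈ T, {i | g t i ≠ 0}
  refine ⟨K, T.finite_toSet.biUnion hg, (Set.image_mono Set.inter_subset_left).antisymm' ?_⟩
  change (H.map (projHom J) : Set (J → M)) ⊆ (H ⊓ supportedOn K).map (projHom J)
  rw [SetLike.coe_subset_coe, ← hT, AddSubgroup.closure_le]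
  intro t ht
  refine ⟨g t, ⟨hgH t ht, fun i hi => ?_⟩, hgt t ht⟩
  by_contra hne
  exact hi (Set.mem_biUnion ht hne)

section Counterexample

variable (e : ℕ ↪ I) (m : ℕ → M)

noncomputable def pairHom : (ℕ →₀ ℤ) →+ (I →₀ M) :=
  Finsupp.liftAddHom fun n =>
    zmultiplesHom _ (Finsupp.single (e 0) (m n) + Finsupp.single (e (n + 1)) (m n))

theorem pairHom_apply_hub (c : ℕ →₀ ℤ) : pairHom e m c (e 0) = c.sum fun n k => k • m n := by
  simp [pairHom, Finsupp.liftAddHom_apply, Finsupp.sum_apply]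

theorem pairHom_apply_spoke (c : ℕ →₀ ℤ) (k : ℕ) : pairHom e m c (e (k + 1)) = c k • m k := by
  classical
  simp +contextual [pairHom, Finsupp.liftAddHom_apply, Finsupp.sum_apply, Finsupp.single_apply]

noncomputable def pairSubgroup : AddSubgroup (I → M) :=
  (Finsupp.coeFnAddHom.comp (pairHom e m)).range

theorem countable_pairSubgroup : (pairSubgroup e m : Set (I → M)).Countable :=
  Set.countable_range _

theorem controllable_pairSubgroup : Controllable (pairSubgroup e m) :=
  controllable_of_forall_finite (by rintro _ ⟨c, rfl⟩; exact (pairHom e m c).hasFiniteSupport)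

theorem not_uniformlyControllable_pairSubgroup
    (hm : ∀ n, m n ∉ AddSubgroup.closure (m '' Set.Iio n)) :
    ¬ UniformlyControllable (pairSubgroup e m) := by
  intro hUC
  obtain ⟨K, hK, hproj⟩ := hUC {e 0} (Set.finite_singleton _)
  obtain ⟨N, hN⟩ : ∃ N, ∀ n, N ≤ n → e (n + 1) ∉ K := by
    obtain ⟨b, hb⟩ := (hK.preimage (e.injective.comp Nat.succ_injective).injOn).bddAbove
    exact ⟨b + 1, fun n hn hnK => by have := hb hnK; omega⟩
  have hmem : proj {e 0} (pairHom e m (Finsupp.single N 1)) ∈ proj {e 0} ''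
      ((pairSubgroup e m : Set (I → M)) ∩ {g | ∀ i ∉ K, g i = 0}) := by
    rw [← hproj]
    exact Set.mem_image_of_mem _ ⟨Finsupp.single N 1, rfl⟩
  obtain ⟨_, ⟨⟨c, rfl⟩, hcK⟩, hc⟩ := hmem
  have hcN : (c.sum fun n k => k • m n) = m N := by
    simpa [proj, pairHom_apply_hub] using congrFun hc ⟨e 0, rfl⟩
  apply hm N
  rw [← hcN]
  refine AddSubgroup.sum_mem _ fun n _ => show c n • m n ∈ _ from ?_
  rcases lt_or_ge n N with hn | hn
  · exact zsmul_mem (AddSubgroup.subset_closure (Set.mem_image_of_mem m (Set.mem_Iio.mpr hn))) _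
  · rw [← pairHom_apply_spoke]
    exact hcK _ (hN n hn) ▸ zero_mem _

end Counterexample

theorem exists_countable_controllable_not_uniformlyControllable [Infinite I]
    (hM : ¬ AddGroup.FG M) :
    ∃ H : AddSubgroup (I → M), (H : Set (I → M)).Countable ∧ Controllable H ∧
      ¬ UniformlyControllable H := by
  obtain ⟨m, hm⟩ := exists_seq_notMem_closure_of_not_fg hM
  let e := Infinite.natEmbedding I
  exact ⟨pairSubgroup e m, countable_pairSubgroup e m, controllable_pairSubgroup e m,
    not_uniformlyControllable_pairSubgroup e m hm⟩

end ProductGroup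

theorem controllable_eq_uniformlyControllable_iff_finite_or_fg
    {I : Type*} (M : Type*) [AddCommGroup M] :
    ((∀ H : AddSubgroup (I → M), (H : Set (I → M)).Countable →
        Controllable H → UniformlyControllable H) ↔
      (∀ H : AddSubgroup (I → M), Controllable H → UniformlyControllable H)) ∧
    ((∀ H : AddSubgroup (I → M), Controllable H → UniformlyControllable H) ↔
      (Finite I ∨ AddGroup.FG M)) := by
  have hsuff : Finite I ∨ AddGroup.FG M →
      ∀ H : AddSubgroup (I → M), Controllable H → UniformlyControllable H := by
    rintro (_ | _) H hH
    · exact uniformlyControllable_of_finite H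
    · exact uniformlyControllable_of_fg hH
  have hnec : (∀ H : AddSubgroup (I → M), (H : Set (I → M)).Countable →
      Controllable H → UniformlyControllable H) → Finite I ∨ AddGroup.FG M := by
    intro h
    by_contra! ⟨_, hM⟩
    obtain ⟨H, hcount, hH, hnot⟩ :=
      exists_countable_controllable_not_uniformlyControllable (I := I) hM
    exact hnot (h H hcount hH)
  exact ⟨⟨fun h H hH => hsuff (hnec h) H hH, fun h H _ => h H⟩,
    ⟨fun h => hnec fun H _ => h H, hsuff⟩⟩
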